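/- arXiv:2511.22747 — 7 statements merged into one kernel-verified Lean document; each statement's English description precedes it below -/
import Mathlib

section
/- Let Ω be a finite spanning set of points in a projective space PG(V) over a finite field F_q, and let C(Ω) be the linear code whose generator matrix has as columns coordinate representatives of the points of Ω. Then C(Ω) is a minimal code if and only if Ω is a cutting set with respect to hyperplanes, i.e., for every projective hyperplane H of PG(V), the set Ω ∩ H spans H. -/
/-- A point-line geometry: a set of lines (sets of points), each line has at
least two points, and two distinct points lie on at most one common line. -/
structure PointLineGeometry (P : Type*) where
  lines : Set (Set P)
  two_points : ∀ ℓ ∈ lines, ∃ a ∈ ℓ, ∃ b ∈ ℓ, a ≠ b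
  unique_line : ∀ ℓ₁ ∈ lines, ∀ ℓ₂ ∈ lines, ∀ a b : P,
    a ≠ b → a ∈ ℓ₁ → b ∈ ℓ₁ → a ∈ ℓ₂ → b ∈ ℓ₂ → ℓ₁ = ℓ₂

namespace PointLineGeometry

variable {P : Type*} (G : PointLineGeometry P)

/-- A subspace: a nonempty set of points containing every line meeting it in
at least two points. -/
def IsSubspace (X : Set P) : Prop :=
  X.Nonempty ∧ ∀ ℓ ∈ G.lines, (∃ a ∈ ℓ ∩ X, ∃ b ∈ ℓ ∩ X, a ≠ b) → ℓ ⊆ X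

/-- A geometric hyperplane: a proper subspace meeting every line in the whole
line or in exactly one point. -/
def IsGeomHyperplane (H : Set P) : Prop :=
  G.IsSubspace H ∧ H ≠ Set.univ ∧
    ∀ ℓ ∈ G.lines, ℓ ⊆ H ∨ ∃! p, p ∈ ℓ ∩ H

/-- A maximal (proper) subspace. -/
def IsMaxSubspace (H : Set P) : Prop :=
  G.IsSubspace H ∧ H ≠ Set.univ ∧ ∀ X, G.IsSubspace X → H ⊂ X → X = Set.univ

/-- The collinearity graph. -/
def collGraph : SimpleGraph P where
  Adj p q := p ≠ q ∧ ∃ ℓ ∈ G.lines, p ∈ ℓ ∧ q ∈ ℓ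
  symm := ⟨by
    rintro p q ⟨hpq, ℓ, hℓ, hp, hq⟩
    exact ⟨hpq.symm, ℓ, hℓ, hq, hp⟩⟩
  loopless := ⟨fun p h => h.1 rfl⟩

end PointLineGeometry

/-- A projective embedding of a point-line geometry into `PG(V)`. -/
def IsProjEmbedding {P K V : Type*} [Field K] [AddCommGroup V] [Module K V]
    (G : PointLineGeometry P) (ε : P → Projectivization K V) : Prop :=
  Function.Injective ε ∧
  (∀ ℓ ∈ G.lines, ∃ W : Submodule K V, Module.finrank K W = 2 ∧
      ε '' ℓ = {x : Projectivization K V | x.submodule ≤ W}) ∧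
  (⨆ p : P, (ε p).submodule) = ⊤

/-- The projective hyperplane of `PG(V)` given by a nonzero functional. -/
def pgHyp {K V : Type*} [Field K] [AddCommGroup V] [Module K V]
    (φ : V →ₗ[K] K) : Set (Projectivization K V) :=
  {x | x.submodule ≤ LinearMap.ker φ}

/-- The projective code of the system of points represented by `v`. -/
noncomputable def evCode (K : Type*) {V ι : Type*} [Field K] [AddCommGroup V]
    [Module K V] (v : ι → V) : Submodule K (ι → K) :=
  LinearMap.range (LinearMap.pi (fun i => LinearMap.applyₗ (v i)))

/-- A minimal code: every nonzero codeword is determined, up to a scalar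
multiple, by its support. -/
def IsMinimalCode {K ι : Type*} [Field K] (C : Submodule K (ι → K)) : Prop :=
  ∀ c ∈ C, c ≠ 0 → ∀ c' ∈ C, Function.support c' ⊆ Function.support c →
    ∃ a : K, c' = a • c

/-- The Hamming weight of a word. -/
noncomputable def wt {K ι : Type*} [Zero K] (c : ι → K) : ℕ :=
  Nat.card (Function.support c)


lemma ker_le_smul {K V : Type*} [Field K] [AddCommGroup V] [Module K V]
    {φ ψ : V →ₗ[K] K} (hφ : φ ≠ 0) (h : LinearMap.ker φ ≤ LinearMap.ker ψ) :
    ∃ a : K, ψ = a • φ := by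
  obtain ⟨y, hy⟩ : ∃ y, φ y ≠ 0 := by
    by_contra! h'; exact hφ (LinearMap.ext fun z => h' z)
  refine ⟨ψ y / φ y, LinearMap.ext fun z => ?_⟩
  have hz : z - (φ z / φ y) • y ∈ LinearMap.ker φ := by
    simp [LinearMap.mem_ker, div_mul_cancel₀ _ hy]
  have := h hz
  simp only [LinearMap.mem_ker, map_sub, map_smul, sub_eq_zero, smul_eq_mul] at this
  simp only [LinearMap.smul_apply, smul_eq_mul]
  rw [this]; field_simp


/-- a projective code is minimal iff the projective system is a
cutting set with respect to hyperplanes. -/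
theorem stmt_2 {K V ι : Type*} [Field K] [Fintype K] [AddCommGroup V]
    [Module K V] [FiniteDimensional K V] [Fintype ι] (v : ι → V)
    (hv0 : ∀ i, v i ≠ 0)
    (hdist : ∀ i j, i ≠ j → ∀ a : K, v i ≠ a • v j)
    (hspan : Submodule.span K (Set.range v) = ⊤) :
    IsMinimalCode (evCode K v) ↔
      ∀ φ : V →ₗ[K] K, φ ≠ 0 →
        Submodule.span K {x | x ∈ Set.range v ∧ φ x = 0} = LinearMap.ker φ := by
  have mem_code : ∀ c, c ∈ evCode K v ↔ ∃ φ : V →ₗ[K] K, ∀ i, φ (v i) = c i := by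
    intro c
    simp only [evCode, LinearMap.mem_range]
    constructor
    · rintro ⟨φ, rfl⟩; exact ⟨φ, fun i => rfl⟩
    · rintro ⟨φ, h⟩; exact ⟨φ, funext h⟩
  have code_zero : ∀ φ : V →ₗ[K] K, (∀ i, φ (v i) = 0) → φ = 0 := by
    intro φ h
    apply LinearMap.ext_on hspan
    rintro x ⟨i, rfl⟩; exact h i
  constructor
  · intro hmin φ hφ
    apply le_antisymm
    · rw [Submodule.span_le]
      rintro x ⟨hx, hx0⟩
      exact LinearMap.mem_ker.mpr hx0
    · intro w hw
      by_contra hwW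
      obtain ⟨ψ, hψw, hψW⟩ :=
        Submodule.exists_dual_map_eq_bot_of_notMem hwW inferInstance
      have hψ0 : ∀ x ∈ Submodule.span K {x | x ∈ Set.range v ∧ φ x = 0}, ψ x = 0 := by
        intro x hx
        have : ψ x ∈ Submodule.map ψ (Submodule.span K {x | x ∈ Set.range v ∧ φ x = 0}) :=
          Submodule.mem_map_of_mem hx
        rw [hψW] at this
        simpa using this
      set c : ι → K := fun i => φ (v i) with hc
      set c' : ι → K := fun i => ψ (v i) with hc'
      have hcC : c ∈ evCode K v := (mem_code c).mpr ⟨φ, fun i => rfl⟩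
      have hc'C : c' ∈ evCode K v := (mem_code c').mpr ⟨ψ, fun i => rfl⟩
      have hcne : c ≠ 0 := by
        intro h
        exact hφ (code_zero φ fun i => congrFun h i)
      have hsupp : Function.support c' ⊆ Function.support c := by
        intro i hi
        simp only [Function.mem_support, hc, hc'] at hi ⊢
        intro h0
        exact hi (hψ0 _ (Submodule.subset_span ⟨⟨i, rfl⟩, h0⟩))
      obtain ⟨a, ha⟩ := hmin c hcC hcne c' hc'C hsupp
      have hψφ : ψ = a • φ := by
        apply LinearMap.ext_on hspan
        rintro x ⟨i, rfl⟩
        have := congrFun ha i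
        simpa [hc, hc'] using this
      apply hψw
      rw [hψφ]
      simp [LinearMap.mem_ker.mp hw]
  · intro hcut c hc hc0 c' hc' hsupp
    obtain ⟨φ, hφ⟩ := (mem_code c).mp hc
    obtain ⟨ψ, hψ⟩ := (mem_code c').mp hc'
    have hφ0 : φ ≠ 0 := by
      intro h
      apply hc0
      funext i
      rw [← hφ i, h]; rfl
    have hker : LinearMap.ker φ ≤ LinearMap.ker ψ := by
      rw [← hcut φ hφ0, Submodule.span_le]
      rintro x ⟨⟨i, rfl⟩, h0⟩
      have : i ∉ Function.support c := by simp [Function.mem_support, ← hφ i, h0]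
      have := fun h => this (hsupp h)
      simp only [Function.mem_support, not_not] at this
      simpa [LinearMap.mem_ker, hψ i] using this
    obtain ⟨a, ha⟩ := ker_le_smul hφ0 hker
    refine ⟨a, funext fun i => ?_⟩
    rw [← hψ i, ha]
    simp [← hφ i]
end

section
/- Let Γ be a point-line geometry with projective embedding ε : Γ → PG(V) over a finite field, and let Ω = ε(P). If every geometric hyperplane of Γ arising from ε (i.e., of the form ε⁻¹(H) for H a projective hyperplane of PG(V)) is a maximal subspace of Γ, then the projective code C(Ω) is a minimal code. -/
/-- if every geometric hyperplane of `Γ` arising from the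
embedding `ε` is a maximal subspace, then the projective code `C(ε(P))` is
minimal. -/
theorem stmt_3 {P K V : Type*} [Field K] [Fintype K] [AddCommGroup V]
    [Module K V] [FiniteDimensional K V] [Fintype P]
    (G : PointLineGeometry P) (ε : P → Projectivization K V)
    (hε : IsProjEmbedding G ε)
    (hmax : ∀ φ : V →ₗ[K] K, φ ≠ 0 → G.IsMaxSubspace (ε ⁻¹' pgHyp φ)) :
    IsMinimalCode (evCode K (fun p => (ε p).rep)) := by

  intro c hc hc0 c' hc' hsupp
  obtain ⟨φ, hφ⟩ := LinearMap.mem_range.mp hc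
  obtain ⟨ψ, hψ⟩ := LinearMap.mem_range.mp hc'
  have hc_eq : ∀ p, c p = φ ((ε p).rep) := fun p => by rw [← hφ]; rfl
  have hc'_eq : ∀ p, c' p = ψ ((ε p).rep) := fun p => by rw [← hψ]; rfl
  have mem_iff : ∀ (θ : V →ₗ[K] K) (p : P),
      p ∈ ε ⁻¹' pgHyp θ ↔ θ ((ε p).rep) = 0 := by
    intro θ p
    simp [pgHyp, Projectivization.submodule_eq, Submodule.span_singleton_le_iff_mem,
      LinearMap.mem_ker]
  obtain ⟨p0, hp0⟩ : ∃ p, c p ≠ 0 := by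
    by_contra h
    push_neg at h
    exact hc0 (funext h)
  have hφ0 : φ ≠ 0 := by
    intro h
    exact hp0 (by rw [hc_eq, h]; rfl)
  set t := c' p0 / c p0 with ht
  set χ := ψ - t • φ with hχdef
  by_cases hχ : χ = 0
  · refine ⟨t, funext fun p => ?_⟩
    have : ψ = t • φ := by rwa [hχdef, sub_eq_zero] at hχ
    rw [hc'_eq, this, Pi.smul_apply, hc_eq]
    rfl
  · exfalso
    have hsub : ε ⁻¹' pgHyp φ ⊆ ε ⁻¹' pgHyp χ := by
      intro p hp
      rw [mem_iff] at hp ⊢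
      have hcp : c p = 0 := by rw [hc_eq]; exact hp
      have hc'p : c' p = 0 := by
        by_contra h
        exact (hsupp h) hcp
      rw [hχdef]
      simp only [LinearMap.sub_apply, LinearMap.smul_apply, smul_eq_mul]
      rw [← hc'_eq, ← hc_eq, hc'p, hcp, mul_zero, sub_zero]
    have hp0mem : p0 ∈ ε ⁻¹' pgHyp χ := by
      rw [mem_iff, hχdef]
      simp only [LinearMap.sub_apply, LinearMap.smul_apply, smul_eq_mul]
      rw [← hc'_eq, ← hc_eq, ht, div_mul_cancel₀ _ hp0, sub_self]
    have hp0not : p0 ∉ ε ⁻¹' pgHyp φ := by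
      rw [mem_iff, ← hc_eq]
      exact hp0
    have hss : ε ⁻¹' pgHyp φ ⊂ ε ⁻¹' pgHyp χ :=
      ⟨hsub, fun h => hp0not (h hp0mem)⟩
    have huniv := (hmax φ hφ0).2.2 _ (hmax χ hχ).1 hss
    exact (hmax χ hχ).2.1 huniv
end

section
/- Let Γ be a point-line geometry with projective embedding ε : Γ → PG(V) over a finite field. If for every projective hyperplane H of PG(V) the subgraph induced by the collinearity graph of Γ on P \ ε⁻¹(H) is connected, then the projective code C(ε(P)) is minimal. -/
private lemma const_of_connected {α K : Type*} {G : SimpleGraph α} (h : G.Connected)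
    (f : α → K) (hf : ∀ a b, G.Adj a b → f a = f b) (a b : α) : f a = f b := by
  obtain ⟨w⟩ := h.preconnected a b
  induction w with
  | nil => rfl
  | cons hadj _ ih => exact (hf _ _ hadj).trans ih

/-- if for every projective hyperplane `H` of `PG(V)` the
subgraph induced by the collinearity graph on `P \ ε⁻¹(H)` is connected, then
the projective code `C(ε(P))` is minimal. -/
theorem stmt_4 {P K V : Type*} [Field K] [Fintype K] [AddCommGroup V]
    [Module K V] [FiniteDimensional K V] [Fintype P]
    (G : PointLineGeometry P) (ε : P → Projectivization K V)
    (hε : IsProjEmbedding G ε)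
    (hconn : ∀ φ : V →ₗ[K] K, φ ≠ 0 →
      ((G.collGraph).induce (ε ⁻¹' pgHyp φ)ᶜ).Connected) :
    IsMinimalCode (evCode K (fun p => (ε p).rep)) := by

  obtain ⟨hinj, hlines, hsup⟩ := hε
  rintro c hc hc0 c' hc' hsupp
  obtain ⟨φ, rfl⟩ := hc
  obtain ⟨φ', rfl⟩ := hc'
  set v : P → V := fun p => (ε p).rep with hv
  have happ : ∀ (ψ : V →ₗ[K] K) (p : P),
      (LinearMap.pi (fun i => LinearMap.applyₗ (v i))) ψ p = ψ (v p) := fun _ _ => rfl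
  -- extract a point where c is nonzero
  have hc0' : ∃ p, φ (v p) ≠ 0 := by
    by_contra h
    push_neg at h
    exact hc0 (by ext p; simpa [happ] using h p)
  obtain ⟨p₀, hp₀⟩ := hc0'
  have hφ0 : φ ≠ 0 := fun h => hp₀ (by simp [h])
  have hmem : ∀ p, ε p ∈ pgHyp φ ↔ φ (v p) = 0 := by
    intro p
    rw [pgHyp, Set.mem_setOf_eq, Projectivization.submodule_eq,
      Submodule.span_singleton_le_iff_mem, LinearMap.mem_ker]
  -- φ' vanishes wherever φ does
  have hvan : ∀ p, φ (v p) = 0 → φ' (v p) = 0 := by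
    intro p hp
    by_contra h
    have : p ∈ Function.support ((LinearMap.pi (fun i => LinearMap.applyₗ (v i))) φ') :=
      by simpa [Function.mem_support, happ] using h
    have := hsupp this
    rw [Function.mem_support, happ] at this
    exact this hp
  -- key step: ratio constant along edges outside the hyperplane
  have hkey : ∀ p q : P, φ (v p) ≠ 0 → φ (v q) ≠ 0 → G.collGraph.Adj p q →
      φ' (v p) * (φ (v p))⁻¹ = φ' (v q) * (φ (v q))⁻¹ := by
    intro p q hp hq hadj
    obtain ⟨hne, ℓ, hℓ, hpℓ, hqℓ⟩ := hadj
    obtain ⟨W, hW2, hWset⟩ := hlines ℓ hℓ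
    have hmemW : ∀ r ∈ ℓ, v r ∈ W := by
      intro r hr
      have h1 : ε r ∈ {x : Projectivization K V | x.submodule ≤ W} :=
        hWset ▸ ⟨r, hr, rfl⟩
      exact h1 (by rw [Projectivization.submodule_eq]; exact Submodule.mem_span_singleton_self _)
    have hvpW := hmemW p hpℓ
    have hvqW := hmemW q hqℓ
    -- find a nonzero vector w ∈ W with φ w = 0
    have hker : LinearMap.ker (φ.domRestrict W) ≠ ⊥ := by
      intro h
      have hinj' := LinearMap.ker_eq_bot.mp h
      have := LinearMap.finrank_le_finrank_of_injective hinj'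
      rw [Module.finrank_self, hW2] at this
      omega
    obtain ⟨w', hw'ker, hw'0⟩ := (Submodule.ne_bot_iff _).mp hker
    set w : V := (w' : V) with hwdef
    have hw0 : w ≠ 0 := fun h => hw'0 (Subtype.ext h)
    have hwW : w ∈ W := w'.2
    have hφw : φ w = 0 := hw'ker
    -- a point of ℓ is represented by a multiple of w
    have hx : Projectivization.mk K w hw0 ∈ ε '' ℓ := by
      rw [hWset]
      rw [Set.mem_setOf_eq, Projectivization.submodule_mk, Submodule.span_singleton_le_iff_mem]
      exact hwW
    obtain ⟨r, hrℓ, hrx⟩ := hx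
    have hvr : v r ∈ Submodule.span K {w} := by
      have h1 : v r ∈ (ε r).submodule := by
        rw [Projectivization.submodule_eq]; exact Submodule.mem_span_singleton_self _
      rwa [hrx, Projectivization.submodule_mk] at h1
    obtain ⟨t, ht⟩ := Submodule.mem_span_singleton.mp hvr
    have ht0 : t ≠ 0 := by
      rintro rfl
      exact Projectivization.rep_nonzero (ε r) (ht.symm.trans (zero_smul K w))
    have hφvr : φ (v r) = 0 := by rw [← ht, map_smul, hφw, smul_zero]
    have hφ'w : φ' w = 0 := by
      have := hvan r hφvr
      rw [← ht, map_smul, smul_eq_mul] at this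
      exact (mul_eq_zero.mp this).resolve_left ht0
    -- w and v p are independent and span W
    have hli : LinearIndependent K ![w, v p] := by
      rw [LinearIndependent.pair_iff]
      intro s t' hst
      have h1 : φ (s • w + t' • v p) = 0 := by rw [hst, map_zero]
      rw [map_add, map_smul, map_smul, hφw, smul_zero, zero_add, smul_eq_mul] at h1
      have ht' : t' = 0 := (mul_eq_zero.mp h1).resolve_right hp
      subst ht'
      rw [zero_smul, add_zero, smul_eq_zero] at hst
      exact ⟨hst.resolve_right hw0, rfl⟩
    have hspan : Submodule.span K (Set.range ![w, v p]) = W := by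
      apply Submodule.eq_of_le_of_finrank_le
      · rw [Submodule.span_le, Set.range_subset_iff]
        intro i
        fin_cases i
        · exact hwW
        · exact hvpW
      · rw [finrank_span_eq_card hli, hW2]
        simp
    -- the functional ψ kills W, hence v q
    set ψ : V →ₗ[K] K := φ (v p) • φ' - φ' (v p) • φ with hψ
    have hψW : W ≤ LinearMap.ker ψ := by
      rw [← hspan, Submodule.span_le, Set.range_subset_iff]
      intro i
      fin_cases i
      · simp [hψ, hφw, hφ'w]
      · simp [hψ, mul_comm]
    have hψq : ψ (v q) = 0 := hψW hvqW
    rw [hψ, LinearMap.sub_apply, LinearMap.smul_apply, LinearMap.smul_apply,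
      smul_eq_mul, smul_eq_mul, sub_eq_zero] at hψq
    field_simp
    linear_combination -hψq
  -- use connectivity to make the ratio globally constant
  have hconn' := hconn φ hφ0
  have hScompl : ∀ p : P, (p ∈ (ε ⁻¹' pgHyp φ)ᶜ) ↔ φ (v p) ≠ 0 := by
    intro p
    simp [hmem p]
  set f : ((ε ⁻¹' pgHyp φ)ᶜ : Set P) → K := fun x => φ' (v x) * (φ (v x))⁻¹ with hf
  have hfconst : ∀ x y : ((ε ⁻¹' pgHyp φ)ᶜ : Set P), f x = f y := by
    intro x y
    apply const_of_connected hconn'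
    intro a b hab
    exact hkey a b ((hScompl a).mp a.2) ((hScompl b).mp b.2) hab
  have hp₀S : (p₀ : P) ∈ (ε ⁻¹' pgHyp φ)ᶜ := (hScompl p₀).mpr hp₀
  refine ⟨φ' (v p₀) * (φ (v p₀))⁻¹, ?_⟩
  ext p
  rw [Pi.smul_apply, happ, happ, smul_eq_mul]
  by_cases hp : φ (v p) = 0
  · rw [hp, hvan p hp, mul_zero]
  · have := hfconst ⟨p, (hScompl p).mpr hp⟩ ⟨p₀, hp₀S⟩
    simp only [hf] at this
    field_simp at this ⊢
    linear_combination this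
end

section
/- If a linear code C over F_q satisfies w_max / w_min < q/(q−1), where w_min and w_max are the minimum and maximum weights of nonzero codewords, then C is a minimal code. -/
open Finset in
lemma wt_eq {K ι : Type*} [Zero K] [Fintype ι] [DecidableEq K] (c : ι → K) :
    wt c = (Finset.univ.filter (fun i => c i ≠ 0)).card := by
  classical
  rw [wt, Nat.card_eq_card_toFinset]
  congr 1
  ext i
  simp [Set.mem_toFinset]

lemma wt_pos {K ι : Type*} [Zero K] [Fintype ι] (c : ι → K) (hc : c ≠ 0) :
    0 < wt c := by
  classical
  rw [wt_eq]
  rw [Finset.card_pos]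
  obtain ⟨i, hi⟩ := Function.ne_iff.mp hc
  exact ⟨i, by simpa using hi⟩

lemma key {K ι : Type*} [Field K] [Fintype K] [Fintype ι] [DecidableEq K]
    (c c' : ι → K) (h : ∀ i, c i = 0 → c' i = 0) :
    ∑ a : K, wt (c' - a • c) = (Fintype.card K - 1) * wt c := by
  classical
  have step : ∀ i : ι, (Finset.univ.filter (fun a : K => c' i - a * c i ≠ 0)).card
      = if c i ≠ 0 then Fintype.card K - 1 else 0 := by
    intro i
    by_cases hci : c i = 0
    · simp [hci, h i hci]
    · have h1 : (Finset.univ.filter (fun a : K => c' i - a * c i = 0)) = {c' i * (c i)⁻¹} := by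
        ext a
        simp only [Finset.mem_filter, Finset.mem_univ, true_and, Finset.mem_singleton,
          sub_eq_zero]
        constructor
        · intro ha; field_simp [hci, ha.symm]; exact ha.symm
        · intro ha; subst ha; field_simp
      have h2 := Finset.card_filter_add_card_filter_not
        (s := (Finset.univ : Finset K)) (p := fun a : K => c' i - a * c i = 0)
      simp only [h1, Finset.card_singleton, Finset.card_univ] at h2
      simp only [hci, if_pos, ne_eq, not_false_eq_true]
      omega
  calc ∑ a : K, wt (c' - a • c)
      = ∑ a : K, ∑ i : ι, (if c' i - a * c i ≠ 0 then 1 else 0) := by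
        refine Finset.sum_congr rfl fun a _ => ?_
        rw [wt_eq]
        simp [Finset.card_filter, Pi.sub_apply]
    _ = ∑ i : ι, ∑ a : K, (if c' i - a * c i ≠ 0 then 1 else 0) := Finset.sum_comm
    _ = ∑ i : ι, (if c i ≠ 0 then Fintype.card K - 1 else 0) := by
        refine Finset.sum_congr rfl fun i _ => ?_
        rw [← step i, Finset.card_filter]
    _ = (Fintype.card K - 1) * wt c := by
        rw [wt_eq, Finset.sum_ite, Finset.sum_const, Finset.sum_const_zero, add_zero,
          smul_eq_mul, mul_comm]


/-- Ashikhmin–Barg: if `w_max / w_min < q/(q-1)` then the code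
is minimal. -/
theorem stmt_8 {K ι : Type*} [Field K] [Fintype K] [Fintype ι]
    (C : Submodule K (ι → K)) (hC : ∃ c ∈ C, c ≠ 0)
    (hab : ((sSup {w : ℕ | ∃ c ∈ C, c ≠ 0 ∧ w = wt c} : ℕ) : ℚ) /
          ((sInf {w : ℕ | ∃ c ∈ C, c ≠ 0 ∧ w = wt c} : ℕ) : ℚ)
        < (Fintype.card K : ℚ) / ((Fintype.card K : ℚ) - 1)) :
    IsMinimalCode C := by
  classical
  intro c hcC hc c' hc'C hsupp
  by_cases hc'0 : c' = 0
  · exact ⟨0, by simp [hc'0]⟩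
  set W := {w : ℕ | ∃ c ∈ C, c ≠ 0 ∧ w = wt c} with hW
  have hWne : W.Nonempty := by
    obtain ⟨c₀, hc₀C, hc₀⟩ := hC
    exact ⟨wt c₀, c₀, hc₀C, hc₀, rfl⟩
  have hWbdd : BddAbove W := ⟨Fintype.card ι, by
    rintro w ⟨d, -, -, rfl⟩
    rw [wt_eq]
    exact le_trans (Finset.card_filter_le _ _) (by simp)⟩
  have hminpos : 0 < sInf W := by
    obtain ⟨d, hdC, hd0, hdw⟩ := Nat.sInf_mem hWne
    exact hdw ▸ wt_pos d hd0
  have hq : 2 ≤ Fintype.card K := Fintype.one_lt_card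
  have hle : ∀ u ∈ C, u ≠ 0 → sInf W ≤ wt u ∧ wt u ≤ sSup W := fun u huC hu =>
    ⟨Nat.sInf_le ⟨u, huC, hu, rfl⟩, le_csSup hWbdd ⟨u, huC, hu, rfl⟩⟩
  by_contra hno
  push_neg at hno
  have hmain : Fintype.card K * sInf W ≤ (Fintype.card K - 1) * sSup W := by
    have hsum := key c c' (fun i hi => by
      by_contra h'
      exact hsupp h' hi)
    calc Fintype.card K * sInf W = ∑ _a : K, sInf W := by
          simp [Finset.sum_const, mul_comm]
      _ ≤ ∑ a : K, wt (c' - a • c) := Finset.sum_le_sum fun a _ =>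
          (hle _ (sub_mem hc'C (Submodule.smul_mem C a hcC))
            (fun h0 => hno a (sub_eq_zero.mp h0))).1
      _ = (Fintype.card K - 1) * wt c := hsum
      _ ≤ (Fintype.card K - 1) * sSup W :=
          Nat.mul_le_mul_left _ (hle c hcC hc).2
  have hq1 : (0 : ℚ) < (Fintype.card K : ℚ) - 1 := by
    have : (2 : ℚ) ≤ (Fintype.card K : ℚ) := by exact_mod_cast hq
    linarith
  have hmin1 : (0 : ℚ) < ((sInf W : ℕ) : ℚ) := by exact_mod_cast hminpos
  rw [div_lt_div_iff₀ hmin1 hq1] at hab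
  have hmainQ : (Fintype.card K : ℚ) * ((sInf W : ℕ) : ℚ) ≤ ((Fintype.card K : ℚ) - 1) * ((sSup W : ℕ) : ℚ) := by
    have := hmain
    have h1 : ((Fintype.card K - 1 : ℕ) : ℚ) = (Fintype.card K : ℚ) - 1 := by
      have : 1 ≤ Fintype.card K := by omega
      push_cast [Nat.cast_sub this]
      ring
    calc (Fintype.card K : ℚ) * ((sInf W : ℕ) : ℚ) = ((Fintype.card K * sInf W : ℕ) : ℚ) := by push_cast; ring
      _ ≤ (((Fintype.card K - 1) * sSup W : ℕ) : ℚ) := by exact_mod_cast hmain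
      _ = ((Fintype.card K : ℚ) - 1) * ((sSup W : ℕ) : ℚ) := by rw [Nat.cast_mul, h1]
  linarith
end

section
/- For 1 ≤ k ≤ n−1 and q a prime power, the Grassmann code C_{n,k} over F_q, arising from the Plücker embedding of the Grassmannian of k-dimensional subspaces of F_q^n, has length equal to the Gaussian binomial coefficient [n choose k]_q and dimension equal to the binomial coefficient C(n,k). -/
/-- The decomposable element `v 0 ∧ ⋯ ∧ v (k-1)` of the `k`-th exterior power. -/
noncomputable def wedgePoint (K : Type*) {V : Type*} [Field K] [AddCommGroup V]
    [Module K V] (k : ℕ) (v : Fin k → V) : ⋀[K]^k V :=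
  ⟨ExteriorAlgebra.ιMulti K k v, ExteriorAlgebra.ιMulti_range K k ⟨v, rfl⟩⟩

/-- Points of the Grassmann geometry: `k`-dimensional subspaces of `K^n`. -/
abbrev GrassPts (K : Type*) [Field K] (n k : ℕ) :=
  {W : Submodule K (Fin n → K) // Module.finrank K W = k}

/-- Lines of the Grassmann geometry: pencils of `k`-subspaces between a
`(k-1)`-subspace and a `(k+1)`-subspace. -/
def grassLines (K : Type*) [Field K] (n k : ℕ) : Set (Set (GrassPts K n k)) :=
  {s | ∃ W T : Submodule K (Fin n → K), Module.finrank K W = k - 1 ∧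
      Module.finrank K T = k + 1 ∧ W ≤ T ∧
      s = {X : GrassPts K n k | W ≤ X.1 ∧ X.1 ≤ T}}

/-- The weight of the codeword of the Grassmann code attached to a linear
functional `f` on `⋀^k K^n`: the number of `k`-subspaces on which `f` does not
vanish. -/
noncomputable def gwt (K : Type*) [Field K] (n k : ℕ)
    (f : ⋀[K]^k (Fin n → K) →ₗ[K] K) : ℕ :=
  Nat.card {W : GrassPts K n k | ∃ v : Fin k → (Fin n → K),
    Submodule.span K (Set.range v) = W.1 ∧ f (wedgePoint K k v) ≠ 0}


open Module

lemma nat_card_sigma {ι : Type*} [Fintype ι] (f : ι → Type*) [∀ i, Finite (f i)] :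
    Nat.card (Σ i, f i) = ∑ i, Nat.card (f i) := by
  letI : ∀ i, Fintype (f i) := fun i => Fintype.ofFinite _
  simp [Nat.card_eq_fintype_card, Fintype.card_sigma]

section
variable (K : Type*) [Field K] [Fintype K] (n k : ℕ)

lemma finsub : Finite (Submodule K (Fin n → K)) :=
  Finite.of_injective (fun W => (W : Set (Fin n → K))) SetLike.coe_injective

noncomputable def fib (W : {W : Submodule K (Fin n → K) // finrank K W = k}) :
    {a : {s : Fin k → (Fin n → K) // LinearIndependent K s} //
      Submodule.span K (Set.range a.1) = W.1} ≃
    {t : Fin k → ↥W.1 // LinearIndependent K t} where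
  toFun a := ⟨fun i => ⟨a.1.1 i, by
      have h := Submodule.subset_span (R := K) (Set.mem_range_self (f := a.1.1) i)
      rwa [a.2] at h⟩,
    LinearIndependent.of_comp W.1.subtype a.1.2⟩
  invFun t := ⟨⟨fun i => (t.1 i : Fin n → K), t.2.map' W.1.subtype (Submodule.ker_subtype _)⟩, by
    have hb : Submodule.span K (Set.range t.1) = ⊤ := by
      apply Submodule.eq_top_of_finrank_eq
      rw [finrank_span_eq_card t.2, Fintype.card_fin, W.2]
    have hr : Set.range (fun i => (t.1 i : Fin n → K)) = W.1.subtype '' Set.range t.1 := by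
      rw [← Set.range_comp]; rfl
    rw [hr, ← Submodule.map_span, hb, Submodule.map_top, Submodule.range_subtype]⟩
  left_inv a := by ext i; rfl
  right_inv t := by ext i; rfl

theorem part1 (h1 : 1 ≤ k) (h2 : k ≤ n - 1) :
    Nat.card {W : Submodule K (Fin n → K) // finrank K W = k}
          * ∏ i ∈ Finset.range k, (Fintype.card K ^ k - Fintype.card K ^ i)
        = ∏ i ∈ Finset.range k, (Fintype.card K ^ n - Fintype.card K ^ i) := by
  haveI := finsub K n
  have hkn : k ≤ n := le_trans h2 (Nat.sub_le n 1)
  have htot : Nat.card {s : Fin k → (Fin n → K) // LinearIndependent K s}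
      = ∏ i ∈ Finset.range k, (Fintype.card K ^ n - Fintype.card K ^ i) := by
    rw [card_linearIndependent (by simpa using hkn), ← Fin.prod_univ_eq_prod_range]
    simp
  have e : {s : Fin k → (Fin n → K) // LinearIndependent K s} ≃
      Σ W : {W : Submodule K (Fin n → K) // finrank K W = k},
        {t : Fin k → ↥W.1 // LinearIndependent K t} :=
    (Equiv.sigmaFiberEquiv (fun s : {s : Fin k → (Fin n → K) // LinearIndependent K s} =>
      (⟨Submodule.span K (Set.range s.1), by
        rw [finrank_span_eq_card s.2, Fintype.card_fin]⟩ :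
        {W : Submodule K (Fin n → K) // finrank K W = k}))).symm.trans
    (Equiv.sigmaCongrRight (fun W =>
      (Equiv.subtypeEquivRight
        (q := fun a : {s : Fin k → (Fin n → K) // LinearIndependent K s} =>
          Submodule.span K (Set.range a.1) = W.1)
        (fun a => ⟨fun h => congrArg Subtype.val h, fun h => Subtype.ext h⟩)).trans
      (fib K n k W)))
  letI : Fintype {W : Submodule K (Fin n → K) // finrank K W = k} := Fintype.ofFinite _
  have hfib : ∀ W : {W : Submodule K (Fin n → K) // finrank K W = k},
      Nat.card {t : Fin k → ↥W.1 // LinearIndependent K t}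
        = ∏ i ∈ Finset.range k, (Fintype.card K ^ k - Fintype.card K ^ i) := by
    intro W
    rw [card_linearIndependent (by rw [W.2]), W.2, ← Fin.prod_univ_eq_prod_range]
  rw [← htot, Nat.card_congr e, nat_card_sigma]
  simp only [hfib, Finset.sum_const, smul_eq_mul, Nat.card_eq_fintype_card, Finset.card_univ]

end

open ExteriorAlgebra

section P2
variable (K : Type*) [Field K] (n k : ℕ)

/-- basis vectors of `K^n` -/
noncomputable def E : Fin n → (Fin n → K) := fun j => Pi.single j 1

/-- `j`-th element of `s` -/
def sElt (s : {s : Finset (Fin n) // s.card = k}) (j : Fin k) : Fin n :=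
  (s.1.orderIsoOfFin s.2 j : Fin n)

lemma sElt_mem (s : {s : Finset (Fin n) // s.card = k}) (j : Fin k) :
    sElt n k s j ∈ s.1 := (s.1.orderIsoOfFin s.2 j).2

lemma sElt_inj (s : {s : Finset (Fin n) // s.card = k}) : Function.Injective (sElt n k s) :=
  fun i j h => (s.1.orderIsoOfFin s.2).injective (Subtype.ext h)

/-- the `s`-minor determinant as an alternating map -/
noncomputable def fs (s : {s : Finset (Fin n) // s.card = k}) :
    (Fin n → K) [⋀^Fin k]→ₗ[K] K :=
  (Matrix.detRowAlternating (n := Fin k) (R := K)).compLinearMap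
    (LinearMap.pi fun j => LinearMap.proj (sElt n k s j))

noncomputable def bfam (s : {s : Finset (Fin n) // s.card = k}) :
    ExteriorAlgebra K (Fin n → K) :=
  ιMulti K k (fun j => E K n (sElt n k s j))

lemma fs_apply (s t : {s : Finset (Fin n) // s.card = k}) :
    fs K n k s (fun j => E K n (sElt n k t j)) = if s = t then 1 else 0 := by
  have hM : fs K n k s (fun j => E K n (sElt n k t j)) =
      Matrix.det (Matrix.of fun i j : Fin k =>
        if sElt n k s j = sElt n k t i then (1 : K) else 0) := by
    show Matrix.detRowAlternating _ = _
    congr 1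
    ext i j
    simp [LinearMap.pi_apply, E, Pi.single_apply, Matrix.of_apply]
  rw [hM]
  split_ifs with h
  · subst h
    have : (Matrix.of fun i j : Fin k =>
        if sElt n k s j = sElt n k s i then (1 : K) else 0) = 1 := by
      ext i j
      rw [Matrix.of_apply, Matrix.one_apply]
      by_cases hij : i = j
      · subst hij; simp
      · rw [if_neg hij, if_neg (fun hc => hij ((sElt_inj n k s hc).symm))]
    rw [this, Matrix.det_one]
  · have hsub : ¬ t.1 ⊆ s.1 := by
      intro hc
      exact h (Subtype.ext (Finset.eq_of_subset_of_card_le hc (by rw [s.2, t.2])).symm)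
    obtain ⟨x, hxt, hxs⟩ := Finset.not_subset.mp hsub
    set i : Fin k := (t.1.orderIsoOfFin t.2).symm ⟨x, hxt⟩ with hi
    have hti : sElt n k t i = x := by
      show ((t.1.orderIsoOfFin t.2) ((t.1.orderIsoOfFin t.2).symm ⟨x, hxt⟩) : Fin n) = x
      rw [OrderIso.apply_symm_apply]
    apply Matrix.det_eq_zero_of_row_eq_zero i
    intro j
    rw [Matrix.of_apply, if_neg]
    rw [hti]
    exact fun hc => hxs (hc ▸ sElt_mem n k s j)

noncomputable def Fs (s : {s : Finset (Fin n) // s.card = k}) :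
    ∀ i, (Fin n → K) [⋀^Fin i]→ₗ[K] K :=
  Function.update (fun i => (0 : (Fin n → K) [⋀^Fin i]→ₗ[K] K)) k (fs K n k s)

lemma lift_bfam (s t : {s : Finset (Fin n) // s.card = k}) :
    liftAlternating (Fs K n k s) (bfam K n k t) = if s = t then 1 else 0 := by
  rw [bfam, liftAlternating_apply_ιMulti]
  rw [show Fs K n k s k = fs K n k s from Function.update_self k _ _]
  exact fs_apply K n k s t

lemma bfam_li : LinearIndependent K (bfam K n k) := by
  rw [Fintype.linearIndependent_iff]
  intro g hg s
  have h2 := congrArg (liftAlternating (Fs K n k s)) hg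
  rw [map_sum, map_zero] at h2
  simp only [map_smul, lift_bfam, smul_eq_mul, mul_ite, mul_one, mul_zero] at h2
  rwa [Finset.sum_ite_eq, if_pos (Finset.mem_univ s)] at h2

lemma bfam_span : Submodule.span K (Set.range (bfam K n k)) = ⋀[K]^k (Fin n → K) := by
  apply le_antisymm
  · rw [Submodule.span_le]
    rintro x ⟨s, rfl⟩
    exact ιMulti_range K k ⟨_, rfl⟩
  · rw [← ιMulti_span_fixedDegree, Submodule.span_le]
    rintro x ⟨v, rfl⟩
    have hv : v = fun i => ∑ j, v i j • E K n j := by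
      funext i x
      simp [E, Pi.single_apply, Finset.sum_ite_eq]
    have expand : (ιMulti K k v : ExteriorAlgebra K (Fin n → K)) =
        ∑ r : Fin k → Fin n, (∏ i, v i (r i)) • ιMulti K k (fun i => E K n (r i)) := by
      conv_lhs => rw [hv]
      rw [show ((ιMulti K k) (fun i => ∑ j, v i j • E K n j) : ExteriorAlgebra K (Fin n → K))
          = (ιMulti K k).toMultilinearMap (fun i => ∑ j, v i j • E K n j) from rfl,
        MultilinearMap.map_sum]
      refine Finset.sum_congr rfl fun r _ => ?_
      rw [MultilinearMap.map_smul_univ]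
      rfl
    rw [expand]
    apply Submodule.sum_mem
    intro r _
    apply Submodule.smul_mem
    by_cases hr : Function.Injective r
    · set s : {s : Finset (Fin n) // s.card = k} :=
        ⟨Finset.univ.image r, by
          rw [Finset.card_image_of_injective _ hr, Finset.card_univ, Fintype.card_fin]⟩ with hs
      have hrange : (↑s.1 : Set (Fin n)) = Set.range r := Fintype.coe_image_univ
      let g : Fin k ≃ {x // x ∈ s.1} :=
        (Equiv.ofInjective r hr).trans (Equiv.setCongr hrange.symm)
      let σ : Equiv.Perm (Fin k) := g.trans (s.1.orderIsoOfFin s.2).toEquiv.symm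
      have hσ : ∀ i, sElt n k s (σ i) = r i := by
        intro i
        have h1 : (s.1.orderIsoOfFin s.2) (σ i) = g i :=
          (s.1.orderIsoOfFin s.2).apply_symm_apply (g i)
        have := congrArg Subtype.val h1
        exact this
      have hre : (fun i => E K n (r i)) = (fun j => E K n (sElt n k s j)) ∘ σ := by
        funext i
        simp only [Function.comp_apply, hσ]
      rw [hre, AlternatingMap.map_perm]
      rw [Units.smul_def]
      exact ((Submodule.span K (Set.range (bfam K n k))).toAddSubgroup).zsmul_mem
        (Submodule.subset_span ⟨s, rfl⟩) _
    · obtain ⟨i, j, hij, hne⟩ : ∃ i j, r i = r j ∧ i ≠ j := by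
        simp only [Function.Injective, not_forall] at hr
        obtain ⟨i, j, h1, h2⟩ := hr
        exact ⟨i, j, h1, h2⟩
      rw [(ιMulti K k).map_eq_zero_of_eq _ (by rw [hij]) hne]
      exact Submodule.zero_mem _

noncomputable def bfam' (s : {s : Finset (Fin n) // s.card = k}) : ⋀[K]^k (Fin n → K) :=
  ⟨bfam K n k s, ιMulti_range K k ⟨_, rfl⟩⟩

lemma finrank_exterior : finrank K (⋀[K]^k (Fin n → K)) = n.choose k := by
  have hli : LinearIndependent K (bfam' K n k) :=
    LinearIndependent.of_comp (⋀[K]^k (Fin n → K)).subtype (bfam_li K n k)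
  have hsp : ⊤ ≤ Submodule.span K (Set.range (bfam' K n k)) := by
    have h1 : Submodule.map (⋀[K]^k (Fin n → K)).subtype
        (Submodule.span K (Set.range (bfam' K n k))) =
        Submodule.map (⋀[K]^k (Fin n → K)).subtype ⊤ := by
      rw [Submodule.map_span, Submodule.map_top, Submodule.range_subtype]
      have h2 : (⋀[K]^k (Fin n → K)).subtype '' (Set.range (bfam' K n k))
          = Set.range (bfam K n k) := by
        rw [← Set.range_comp]; rfl
      rw [h2, bfam_span]
    exact le_of_eq (Submodule.map_injective_of_injective
      (Submodule.injective_subtype _) h1).symm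
  let B : Basis {s : Finset (Fin n) // s.card = k} K (⋀[K]^k (Fin n → K)) :=
    Basis.mk hli hsp
  rw [finrank_eq_card_basis B, Fintype.card_finset_len, Fintype.card_fin]

theorem part2 :
    finrank K (Submodule.span K
        {x : ⋀[K]^k (Fin n → K) | ∃ v : Fin k → (Fin n → K),
          LinearIndependent K v ∧ x = wedgePoint K k v}) = n.choose k := by
  have hS : Submodule.span K {x : ⋀[K]^k (Fin n → K) | ∃ v : Fin k → (Fin n → K),
      LinearIndependent K v ∧ x = wedgePoint K k v} = ⊤ := by
    apply Submodule.map_injective_of_injective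
      (Submodule.injective_subtype (⋀[K]^k (Fin n → K)))
    rw [Submodule.map_span, Submodule.map_top, Submodule.range_subtype]
    apply le_antisymm
    · rw [Submodule.span_le]
      rintro x ⟨y, ⟨v, hv, rfl⟩, rfl⟩
      exact (wedgePoint K k v).2
    · refine le_trans (le_of_eq (ιMulti_span_fixedDegree K k).symm) ?_
      rw [Submodule.span_le]
      rintro x ⟨v, rfl⟩
      by_cases h : LinearIndependent K v
      · exact Submodule.subset_span ⟨wedgePoint K k v, ⟨v, h, rfl⟩, rfl⟩
      · rw [show (ιMulti K k v : ExteriorAlgebra K (Fin n → K)) = 0 from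
          (ιMulti K k).map_linearDependent v h]
        exact Submodule.zero_mem _
  rw [hS, finrank_top, finrank_exterior]
end P2

/-- the Grassmann code has length the Gaussian binomial
coefficient `[n k]_q` and dimension the binomial coefficient `C(n,k)`. -/
theorem stmt_9 (K : Type*) [Field K] [Fintype K] (n k : ℕ)
    (h1 : 1 ≤ k) (h2 : k ≤ n - 1) :
    Nat.card {W : Submodule K (Fin n → K) // Module.finrank K W = k}
          * ∏ i ∈ Finset.range k, (Fintype.card K ^ k - Fintype.card K ^ i)
        = ∏ i ∈ Finset.range k, (Fintype.card K ^ n - Fintype.card K ^ i) ∧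
      Module.finrank K (Submodule.span K
          {x : ⋀[K]^k (Fin n → K) | ∃ v : Fin k → (Fin n → K),
            LinearIndependent K v ∧ x = wedgePoint K k v}) = n.choose k :=
  ⟨part1 K n k h1 h2, part2 K n k⟩
end

section
/- For 1 ≤ k ≤ n−1 and q a prime power, the Grassmann code C_{n,k} over F_q is a minimal code. -/
section GrassmannMinimal

open ExteriorAlgebra

section Aux
variable {K V : Type*} [Field K] [AddCommGroup V] [Module K V]

lemma ιMulti_snoc (m : ℕ) (v : Fin m → V) (u : V) :
    ιMulti K (m+1) (Fin.snoc v u) = ιMulti K m v * ι K u := by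
  rw [ιMulti_apply, ιMulti_apply, List.ofFn_succ']
  simp

lemma mul_ι_mem {m : ℕ} {x : ExteriorAlgebra K V} (hx : x ∈ ⋀[K]^m V) (u : V) :
    x * ι K u ∈ ⋀[K]^(m+1) V := by
  rw [exteriorPower, pow_succ]
  exact Submodule.mul_mem_mul hx (LinearMap.mem_range_self _ u)

lemma ι_anticomm (x y : V) : ι K x * ι K y = -(ι K y * ι K x) :=
  eq_neg_of_add_eq_zero_left (ι_add_mul_swap x y)

lemma swap3 (t : ExteriorAlgebra K V) (x y : V) :
    t * ι K x * ι K y = -(t * ι K y * ι K x) := by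
  rw [mul_assoc, ι_anticomm, mul_neg, mul_assoc]

lemma ιMulti_split (m : ℕ) (v : Fin (m+1) → V) :
    ιMulti K (m+1) v = ιMulti K m (Fin.init v) * ι K (v (Fin.last m)) := by
  rw [← ιMulti_snoc]
  congr 1
  exact (Fin.snoc_init_self v).symm

end Aux

section Key
variable {K V : Type*} [Field K] [AddCommGroup V] [Module K V]

set_option maxHeartbeats 1000000 in
theorem key_s13 (k : ℕ) (hk : 1 ≤ k) :
    ∀ (F : ExteriorAlgebra K V →ₗ[K] K), ∀ w ∈ ⋀[K]^k V, F w = 0 →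
      w ∈ Submodule.span K {x : ExteriorAlgebra K V |
        (∃ v : Fin k → V, x = ιMulti K k v) ∧ F x = 0} := by
  induction k, hk using Nat.le_induction with
  | base =>
    intro F w hw hF
    have hw' : w ∈ LinearMap.range (ι K : V →ₗ[K] ExteriorAlgebra K V) := by
      rwa [exteriorPower, pow_one] at hw
    obtain ⟨u, hu⟩ := hw'
    exact Submodule.subset_span ⟨⟨fun _ => u, by rw [← hu]; simp [ιMulti_apply]⟩, hF⟩
  | succ m hm IH =>
    intro F w hw hF
    set S : Set (ExteriorAlgebra K V) := {x : ExteriorAlgebra K V |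
        (∃ v : Fin (m+1) → V, x = ιMulti K (m+1) v) ∧ F x = 0} with hS
    -- pure terms with F-value zero are in the span
    have pureZero : ∀ y ∈ ⋀[K]^m V, ∀ u : V, F (y * ι K u) = 0 →
        y * ι K u ∈ Submodule.span K S := by
      intro y hy u h0
      have h1 := IH (F ∘ₗ LinearMap.mulRight K (ι K u)) y hy (by simpa using h0)
      refine Submodule.span_induction ?_ ?_ ?_ ?_ h1
        (p := fun x _ => x * ι K u ∈ Submodule.span K S)
      · rintro x ⟨⟨v, rfl⟩, hx0⟩
        exact Submodule.subset_span ⟨⟨Fin.snoc v u, (ιMulti_snoc m v u).symm⟩,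
          by simpa using hx0⟩
      · simp
      · intro a b _ _ ha hb; rw [add_mul]; exact Submodule.add_mem _ ha hb
      · intro a x _ hx; rw [smul_mul_assoc]; exact Submodule.smul_mem _ _ hx
    -- find pure witnesses with nonzero value
    have exWitness : ∀ (y : ExteriorAlgebra K V), y ∈ ⋀[K]^m V → ∀ u : V,
        F (y * ι K u) ≠ 0 → ∃ v : Fin m → V, F (ιMulti K m v * ι K u) ≠ 0 := by
      intro y hy u hne
      by_contra hall
      push_neg at hall
      apply hne
      rw [← ιMulti_span_fixedDegree] at hy
      refine Submodule.span_induction ?_ ?_ ?_ ?_ hy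
        (p := fun x _ => F (x * ι K u) = 0)
      · rintro x ⟨v, rfl⟩; exact hall v
      · simp
      · intro a b _ _ ha hb; rw [add_mul, map_add, ha, hb, add_zero]
      · intro a x _ hx; rw [smul_mul_assoc, map_smul, hx, smul_zero]
    -- two pure terms whose values sum to zero are in the span
    have Rlem : ∀ (y : ExteriorAlgebra K V) (u : V) (z : ExteriorAlgebra K V) (v : V),
        y ∈ ⋀[K]^m V → z ∈ ⋀[K]^m V → F (y * ι K u) + F (z * ι K v) = 0 →
        y * ι K u + z * ι K v ∈ Submodule.span K S := by
      intro y u z v hy hz hsum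
      by_cases hc : F (y * ι K u) = 0
      · have hz0 : F (z * ι K v) = 0 := by rw [hc, zero_add] at hsum; exact hsum
        exact Submodule.add_mem _ (pureZero y hy u hc) (pureZero z hz v hz0)
      · have hzv : F (z * ι K v) = -(F (y * ι K u)) := eq_neg_of_add_eq_zero_right hsum
        obtain ⟨av, hav⟩ := exWitness y hy u hc
        obtain ⟨bv, hbv⟩ := exWitness z hz v (by rw [hzv]; exact neg_ne_zero.2 hc)
        obtain ⟨r, rfl⟩ : ∃ r, m = r + 1 := ⟨m - 1, by omega⟩
        set τ : ExteriorAlgebra K V := ιMulti K r (Fin.init av) with hτ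
        set a : V := av (Fin.last r) with ha
        set σ : ExteriorAlgebra K V := ιMulti K r (Fin.init bv) with hσ
        set b : V := bv (Fin.last r) with hb
        have hτmem : τ ∈ ⋀[K]^r V := ιMulti_range K r ⟨_, rfl⟩
        have hσmem : σ ∈ ⋀[K]^r V := ιMulti_range K r ⟨_, rfl⟩
        have hc1 : F (τ * ι K a * ι K u) ≠ 0 := by
          rwa [ιMulti_split r av, ← hτ, ← ha] at hav
        have hc2 : F (σ * ι K b * ι K v) ≠ 0 := by
          rwa [ιMulti_split r bv, ← hσ, ← hb] at hbv
        -- find a good middle vertex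
        have hgood : ∃ g : V, F (τ * ι K g * ι K u) ≠ 0 ∧ F (σ * ι K g * ι K v) ≠ 0 := by
          by_cases h1 : F (τ * ι K b * ι K u) = 0
          · by_cases h2 : F (σ * ι K a * ι K v) = 0
            · refine ⟨a + b, ?_, ?_⟩
              · rw [map_add, mul_add, add_mul, map_add, h1, add_zero]; exact hc1
              · rw [map_add, mul_add, add_mul, map_add, h2, zero_add]; exact hc2
            · exact ⟨a, hc1, h2⟩
          · exact ⟨b, h1, hc2⟩
        obtain ⟨g, hgu, hgv⟩ := hgood
        -- the chain argument
        set c : K := F (y * ι K u) with hcdef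
        set cp : K := F (τ * ι K g * ι K u) with hcp
        set cs : K := F (σ * ι K g * ι K v) with hcs
        set e : K := c / cp with he
        set d : K := c / cs with hd
        have hτg : τ * ι K g ∈ ⋀[K]^(r+1) V := mul_ι_mem hτmem g
        have hσg : σ * ι K g ∈ ⋀[K]^(r+1) V := mul_ι_mem hσmem g
        have hτu : τ * ι K u ∈ ⋀[K]^(r+1) V := mul_ι_mem hτmem u
        have hσv : σ * ι K v ∈ ⋀[K]^(r+1) V := mul_ι_mem hσmem v
        have h1 : (y - e • (τ * ι K g)) * ι K u ∈ Submodule.span K S := by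
          refine pureZero _ (Submodule.sub_mem _ hy (Submodule.smul_mem _ _ hτg)) u ?_
          rw [sub_mul, smul_mul_assoc, map_sub, map_smul, ← hcdef, ← hcp, smul_eq_mul, he]
          field_simp
          ring
        have h2 : (d • (σ * ι K v) - e • (τ * ι K u)) * ι K g ∈ Submodule.span K S := by
          refine pureZero _ (Submodule.sub_mem _ (Submodule.smul_mem _ _ hσv)
            (Submodule.smul_mem _ _ hτu)) g ?_
          rw [sub_mul, smul_mul_assoc, smul_mul_assoc, map_sub, map_smul, map_smul,
            swap3 σ v g, swap3 τ u g, map_neg, map_neg, ← hcp, ← hcs,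
            smul_eq_mul, smul_eq_mul, he, hd]
          field_simp
          ring
        have h3 : (z + d • (σ * ι K g)) * ι K v ∈ Submodule.span K S := by
          refine pureZero _ (Submodule.add_mem _ hz (Submodule.smul_mem _ _ hσg)) v ?_
          rw [add_mul, smul_mul_assoc, map_add, map_smul, hzv, ← hcs,
            smul_eq_mul, hd]
          field_simp
          ring
        have heq : y * ι K u + z * ι K v =
            (y - e • (τ * ι K g)) * ι K u + (d • (σ * ι K v) - e • (τ * ι K u)) * ι K g
              + (z + d • (σ * ι K g)) * ι K v := by
          rw [sub_mul, sub_mul, add_mul, smul_mul_assoc, smul_mul_assoc, smul_mul_assoc,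
            smul_mul_assoc, swap3 τ g u, swap3 σ g v]
          module
        rw [heq]
        exact Submodule.add_mem _ (Submodule.add_mem _ h1 h2) h3
    -- finish: correction trick
    by_cases hex : ∃ v0 : Fin (m+1) → V, F (ιMulti K (m+1) v0) ≠ 0
    · obtain ⟨v0, hv0⟩ := hex
      have main : ∀ x, x ∈ ⋀[K]^(m+1) V →
          x - (F x / F (ιMulti K (m+1) v0)) • ιMulti K (m+1) v0 ∈ Submodule.span K S := by
        intro x hx
        rw [← ιMulti_span_fixedDegree] at hx
        refine Submodule.span_induction ?_ ?_ ?_ ?_ hx (p := fun x _ =>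
          x - (F x / F (ιMulti K (m+1) v0)) • ιMulti K (m+1) v0 ∈ Submodule.span K S)
        · rintro x ⟨v, rfl⟩
          rw [ιMulti_split m v, ιMulti_split m v0, sub_eq_add_neg, ← neg_smul, ← smul_mul_assoc]
          refine Rlem _ _ _ _ (ιMulti_range K m ⟨_, rfl⟩)
            (Submodule.smul_mem _ _ (ιMulti_range K m ⟨_, rfl⟩)) ?_
          rw [smul_mul_assoc, map_smul, smul_eq_mul, ← ιMulti_split m v, ← ιMulti_split m v0,
            neg_mul, div_mul_cancel₀ _ hv0, add_neg_cancel]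
        · simp
        · intro x y hx hy hx' hy'
          have := Submodule.add_mem _ hx' hy'
          convert this using 1
          rw [map_add, add_div, add_smul]
          abel
        · intro t x hx hx'
          have := Submodule.smul_mem _ t hx'
          convert this using 1
          rw [map_smul, smul_sub, smul_smul, smul_eq_mul, mul_div_assoc]
      have := main w hw
      rw [hF, zero_div, zero_smul, sub_zero] at this
      exact this
    · push_neg at hex
      have hsub : Set.range (ιMulti K (m+1) (M := V)) ⊆ S :=
        fun x ⟨v, hv⟩ => ⟨⟨v, hv.symm⟩, hv ▸ hex v⟩
      rw [← ιMulti_span_fixedDegree] at hw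
      exact Submodule.span_mono hsub hw
end Key

section Prop1
variable {K V : Type*} [Field K] [AddCommGroup V] [Module K V]

lemma wedge_proportional {k : ℕ} (v v' : Fin k → V)
    (hv : LinearIndependent K v) (hv' : LinearIndependent K v')
    (hsp : Submodule.span K (Set.range v) = Submodule.span K (Set.range v')) :
    ∃ c : K, c ≠ 0 ∧ ιMulti K k v = c • ιMulti K k v' := by
  classical
  set N := Submodule.span K (Set.range v') with hN
  let bN : Module.Basis (Fin k) K (Submodule.span K (Set.range v)) := Module.Basis.span hv
  let e : Submodule.span K (Set.range v) ≃ₗ[K] N := LinearEquiv.ofEq _ _ hsp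
  let bv : Module.Basis (Fin k) K N := bN.map e
  let b' : Module.Basis (Fin k) K N := Module.Basis.span hv'
  let g : N [⋀^Fin k]→ₗ[K] ExteriorAlgebra K V := (ιMulti K k).compLinearMap N.subtype
  have hdet : ∀ x : Fin k → N, g x = (b'.det x) • g b' := by
    intro x
    rw [← sub_eq_zero, ← Module.forall_dual_apply_eq_zero_iff K]
    intro φ
    have h1 : (φ.compAlternatingMap g) = (φ.compAlternatingMap g) b' • b'.det :=
      AlternatingMap.eq_smul_basis_det b' _
    have h2 := DFunLike.congr_fun h1 x
    simp only [LinearMap.compAlternatingMap_apply, AlternatingMap.smul_apply,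
      smul_eq_mul] at h2
    rw [map_sub, map_smul, h2, smul_eq_mul, mul_comm, sub_self]
  have hbv : ∀ i, (bv i : V) = v i := by
    intro i
    simp only [bv, Module.Basis.map_apply, e, LinearEquiv.coe_ofEq_apply]
    exact congrArg Subtype.val (Module.Basis.span_apply hv i)
  have hb' : ∀ i, (b' i : V) = v' i := fun i => congrArg Subtype.val (Module.Basis.span_apply hv' i)
  have hgbv : g bv = ιMulti K k v := by
    show ιMulti K k (fun i => (bv i : V)) = _
    congr 1
    exact funext hbv
  have hgb' : g b' = ιMulti K k v' := by
    show ιMulti K k (fun i => (b' i : V)) = _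
    congr 1
    exact funext hb'
  refine ⟨b'.det bv, (b'.isUnit_det bv).ne_zero, ?_⟩
  rw [← hgbv, ← hgb']
  exact hdet bv
end Prop1

section L
variable {K V : Type*} [Field K] [AddCommGroup V] [Module K V]

lemma functional_proportional (k : ℕ) (hk : 1 ≤ k) (F G : ExteriorAlgebra K V →ₗ[K] K)
    (h : ∀ v : Fin k → V, F (ιMulti K k v) = 0 → G (ιMulti K k v) = 0) :
    ∃ a : K, ∀ x ∈ ⋀[K]^k V, G x = a * F x := by
  have hlin : ∀ a : K, (∀ v : Fin k → V, G (ιMulti K k v) = a * F (ιMulti K k v)) →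
      ∀ x ∈ ⋀[K]^k V, G x = a * F x := by
    intro a ha x hx
    rw [← ιMulti_span_fixedDegree] at hx
    refine Submodule.span_induction ?_ ?_ ?_ ?_ hx (p := fun x _ => G x = a * F x)
    · rintro x ⟨v, rfl⟩; exact ha v
    · simp
    · intro x y _ _ hx hy; rw [map_add, map_add, hx, hy]; ring
    · intro t x _ hx; rw [map_smul, map_smul, smul_eq_mul, smul_eq_mul, hx]; ring
  by_cases hex : ∃ v0 : Fin k → V, F (ιMulti K k v0) ≠ 0
  · obtain ⟨v0, hv0⟩ := hex
    refine ⟨G (ιMulti K k v0) / F (ιMulti K k v0), hlin _ ?_⟩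
    intro v
    by_cases h0 : F (ιMulti K k v) = 0
    · rw [h0, mul_zero, h v h0]
    · set x := ιMulti K k v - (F (ιMulti K k v) / F (ιMulti K k v0)) • ιMulti K k v0 with hx
      have hxmem : x ∈ ⋀[K]^k V := Submodule.sub_mem _ (ιMulti_range K k ⟨_, rfl⟩)
        (Submodule.smul_mem _ _ (ιMulti_range K k ⟨_, rfl⟩))
      have hxF : F x = 0 := by
        rw [hx, map_sub, map_smul, smul_eq_mul, div_mul_cancel₀ _ hv0, sub_self]
      have hxspan := key_s13 k hk F x hxmem hxF
      have hGx : G x = 0 := by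
        have hle : Submodule.span K {x : ExteriorAlgebra K V |
            (∃ v : Fin k → V, x = ιMulti K k v) ∧ F x = 0} ≤ LinearMap.ker G := by
          rw [Submodule.span_le]
          rintro y ⟨⟨w, rfl⟩, hy0⟩
          exact h w hy0
        exact hle hxspan
      have h2 : G x = G (ιMulti K k v) -
          (F (ιMulti K k v) / F (ιMulti K k v0)) * G (ιMulti K k v0) := by
        rw [hx, map_sub, map_smul, smul_eq_mul]
      rw [h2] at hGx
      have h3 := sub_eq_zero.mp hGx
      rw [h3]
      field_simp
  · push_neg at hex
    refine ⟨0, hlin 0 ?_⟩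
    intro v
    rw [h v (hex v), zero_mul]
end L

end GrassmannMinimal

/-- the Grassmann code `C_{n,k}` over a finite field is a
minimal code. -/
theorem stmt_13 (K : Type*) [Field K] [Fintype K] (n k : ℕ)
    (h1 : 1 ≤ k) (h2 : k ≤ n - 1)
    (rep : GrassPts K n k → ⋀[K]^k (Fin n → K))
    (hrep : ∀ W : GrassPts K n k, ∃ v : Fin k → (Fin n → K),
      Submodule.span K (Set.range v) = W.1 ∧ rep W = wedgePoint K k v) :
    IsMinimalCode (evCode K rep) := by
  classical
  intro c hc hc0 c' hc' hsupp
  obtain ⟨f, hf⟩ := hc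
  obtain ⟨g, hg⟩ := hc'
  have hcW : ∀ W, c W = f (rep W) := by
    intro W; rw [← hf]; rfl
  have hc'W : ∀ W, c' W = g (rep W) := by
    intro W; rw [← hg]; rfl
  obtain ⟨Q, hQ⟩ := Submodule.exists_isCompl (⋀[K]^k (Fin n → K))
  set π := (⋀[K]^k (Fin n → K)).projectionOnto Q hQ with hπ
  set F := f ∘ₗ π with hFdef
  set G := g ∘ₗ π with hGdef
  have hFval : ∀ (x : ⋀[K]^k (Fin n → K)), F x.1 = f x := by
    intro x
    rw [hFdef, LinearMap.comp_apply, hπ, Submodule.linearProjOfIsCompl_apply_left hQ x]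
  have hGval : ∀ (x : ⋀[K]^k (Fin n → K)), G x.1 = g x := by
    intro x
    rw [hGdef, LinearMap.comp_apply, hπ, Submodule.linearProjOfIsCompl_apply_left hQ x]
  have hcond : ∀ v : Fin k → (Fin n → K), F (ExteriorAlgebra.ιMulti K k v) = 0 → G (ExteriorAlgebra.ιMulti K k v) = 0 := by
    intro v hFv
    by_cases hind : LinearIndependent K v
    · have hfr : Module.finrank K (Submodule.span K (Set.range v)) = k := by
        rw [finrank_span_eq_card hind, Fintype.card_fin]
      set W : GrassPts K n k := ⟨Submodule.span K (Set.range v), hfr⟩ with hW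
      obtain ⟨v', hspan', hrep'⟩ := hrep W
      have hind' : LinearIndependent K v' := by
        rw [linearIndependent_iff_card_eq_finrank_span, Fintype.card_fin]
        show k = Module.finrank K (Submodule.span K (Set.range v'))
        rw [hspan']
        exact hfr.symm
      obtain ⟨cc, hcc0, hcc⟩ := wedge_proportional v v' hind hind'
        (by rw [hspan'])
      have hval : ((rep W : ⋀[K]^k (Fin n → K)) : ExteriorAlgebra K (Fin n → K))
          = ExteriorAlgebra.ιMulti K k v' := by rw [hrep']; rfl
      have hFv' : f (rep W) = 0 := by
        have hFveq : F (ExteriorAlgebra.ιMulti K k v) = cc * f (rep W) := by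
          rw [hcc, map_smul, smul_eq_mul, ← hval, hFval (rep W)]
        rw [hFveq] at hFv
        exact (mul_eq_zero.mp hFv).resolve_left hcc0
      have hsupc : W ∉ Function.support c := by
        rw [Function.mem_support, not_not, hcW]; exact hFv'
      have hc'0 : c' W = 0 := by
        by_contra hne
        exact hsupc (hsupp (Function.mem_support.mpr hne))
      have hgW : g (rep W) = 0 := by rw [← hc'W]; exact hc'0
      rw [hcc, map_smul, smul_eq_mul, ← hval, hGval (rep W), hgW, mul_zero]
    · have h0 : ExteriorAlgebra.ιMulti K k v = 0 := AlternatingMap.map_linearDependent _ v hind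
      rw [h0, map_zero]
  obtain ⟨a, ha⟩ := functional_proportional k h1 F G hcond
  refine ⟨a, ?_⟩
  funext W
  have := ha ((rep W : ⋀[K]^k (Fin n → K)) : ExteriorAlgebra K (Fin n → K)) (rep W).2
  rw [hFval, hGval] at this
  rw [hc'W, this, Pi.smul_apply, smul_eq_mul, hcW]
end

section
/- For every hyperplane H of PG(V₁ ⊗ V₂) over F_q, where dim V₁ = m+1 and dim V₂ = n+1, the set of pure tensor points of the Segre variety lying in H spans a projective subspace of dimension exactly mn+m+n−1; i.e., H ∩ S_{m,n} spans H. -/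
set_option maxHeartbeats 800000
set_option synthInstance.maxHeartbeats 200000


open scoped TensorProduct in
/-- for every hyperplane `H` of `PG(V₁ ⊗ V₂)`, the pure tensors
lying in `H` span `H`, a projective subspace of dimension `mn+m+n-1`. -/
theorem stmt_17 (K : Type*) [Field K] [Fintype K] (m n : ℕ)
    (φ : (Fin (m + 1) → K) ⊗[K] (Fin (n + 1) → K) →ₗ[K] K) (hφ : φ ≠ 0) :
    Submodule.span K {x : (Fin (m + 1) → K) ⊗[K] (Fin (n + 1) → K) |
        (∃ p r, x = p ⊗ₜ[K] r) ∧ φ x = 0} = LinearMap.ker φ ∧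
      Module.finrank K (Submodule.span K
          {x : (Fin (m + 1) → K) ⊗[K] (Fin (n + 1) → K) |
            (∃ p r, x = p ⊗ₜ[K] r) ∧ φ x = 0})
        = m * n + m + n := by
  classical
  set V₁ := Fin (m + 1) → K
  set V₂ := Fin (n + 1) → K
  set S : Set (V₁ ⊗[K] V₂) :=
    {x : V₁ ⊗[K] V₂ | (∃ p r, x = p ⊗ₜ[K] r) ∧ φ x = 0} with hSdef
  set W : Submodule K (V₁ ⊗[K] V₂) := Submodule.span K S with hWdef
  -- there is a pure tensor on which φ is nonzero
  obtain ⟨p₀, r₀, hb₀⟩ : ∃ p₀ r₀, φ (p₀ ⊗ₜ[K] r₀) ≠ 0 := by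
    by_contra h
    push_neg at h
    exact hφ (TensorProduct.ext' (fun p r => by simp [h p r]))
  set b₀ : K := φ (p₀ ⊗ₜ[K] r₀) with hb₀def
  -- key lemma B
  have lemB : ∀ (p : V₁) (r : V₂), φ (p ⊗ₜ[K] r₀) = 0 → φ (p₀ ⊗ₜ[K] r) = 0 →
      p ⊗ₜ[K] r - (φ (p ⊗ₜ[K] r) / b₀) • p₀ ⊗ₜ[K] r₀ ∈ W := by
    intro p r h1 h2
    set c : K := φ (p ⊗ₜ[K] r) / b₀ with hc
    have key : (p + p₀) ⊗ₜ[K] (r - c • r₀) ∈ W := by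
      apply Submodule.subset_span
      refine ⟨⟨_, _, rfl⟩, ?_⟩
      have hexp : (p + p₀) ⊗ₜ[K] (r - c • r₀)
          = p ⊗ₜ[K] r - c • (p ⊗ₜ[K] r₀) + (p₀ ⊗ₜ[K] r - c • (p₀ ⊗ₜ[K] r₀)) := by
        rw [TensorProduct.add_tmul, TensorProduct.tmul_sub, TensorProduct.tmul_sub,
          TensorProduct.tmul_smul, TensorProduct.tmul_smul]
      rw [hexp, map_add, map_sub, map_sub, map_smul, map_smul, h1, h2, hc, ← hb₀def]
      simp only [smul_eq_mul]
      field_simp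
      ring
    have hpr0 : p ⊗ₜ[K] r₀ ∈ W := Submodule.subset_span ⟨⟨_, _, rfl⟩, h1⟩
    have hp0r : p₀ ⊗ₜ[K] r ∈ W := Submodule.subset_span ⟨⟨_, _, rfl⟩, h2⟩
    have hexp2 : p ⊗ₜ[K] r - c • p₀ ⊗ₜ[K] r₀
        = (p + p₀) ⊗ₜ[K] (r - c • r₀) - p₀ ⊗ₜ[K] r + c • (p ⊗ₜ[K] r₀) := by
      rw [TensorProduct.add_tmul, TensorProduct.tmul_sub, TensorProduct.tmul_sub,
        TensorProduct.tmul_smul, TensorProduct.tmul_smul]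
      abel
    rw [hexp2]
    exact W.add_mem (W.sub_mem key hp0r) (W.smul_mem c hpr0)
  -- key lemma C : general pure tensors
  have lemC : ∀ (p : V₁) (r : V₂),
      p ⊗ₜ[K] r - (φ (p ⊗ₜ[K] r) / b₀) • p₀ ⊗ₜ[K] r₀ ∈ W := by
    intro p r
    set a : K := φ (p ⊗ₜ[K] r₀) / b₀ with ha
    set b : K := φ (p₀ ⊗ₜ[K] r) / b₀ with hb
    set p' : V₁ := p - a • p₀ with hp'
    set r' : V₂ := r - b • r₀ with hr'
    have h1 : φ (p' ⊗ₜ[K] r₀) = 0 := by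
      rw [hp', TensorProduct.sub_tmul, map_sub, ← TensorProduct.smul_tmul',
        map_smul, ha, ← hb₀def]
      simp only [smul_eq_mul]
      field_simp
      ring
    have h2 : φ (p₀ ⊗ₜ[K] r') = 0 := by
      rw [hr', TensorProduct.tmul_sub, map_sub, TensorProduct.tmul_smul,
        map_smul, hb, ← hb₀def]
      simp only [smul_eq_mul]
      field_simp
      ring
    have h3 := lemB p' r' h1 h2
    have hpr0 : p' ⊗ₜ[K] r₀ ∈ W := Submodule.subset_span ⟨⟨_, _, rfl⟩, h1⟩
    have hp0r : p₀ ⊗ₜ[K] r' ∈ W := Submodule.subset_span ⟨⟨_, _, rfl⟩, h2⟩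
    -- decomposition of p ⊗ r
    have hdec : p ⊗ₜ[K] r = p' ⊗ₜ[K] r' + b • (p' ⊗ₜ[K] r₀) + a • (p₀ ⊗ₜ[K] r')
        + (a * b) • (p₀ ⊗ₜ[K] r₀) := by
      simp only [hp', hr', TensorProduct.sub_tmul, TensorProduct.tmul_sub,
        ← TensorProduct.smul_tmul', TensorProduct.tmul_smul, smul_sub, smul_smul]
      module
    have hφdec : φ (p ⊗ₜ[K] r) / b₀ = φ (p' ⊗ₜ[K] r') / b₀ + a * b := by
      rw [hdec, map_add, map_add, map_add, map_smul, map_smul, map_smul,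
        h1, h2, ← hb₀def]
      simp only [smul_eq_mul]
      field_simp
      ring
    have hfinal : p ⊗ₜ[K] r - (φ (p ⊗ₜ[K] r) / b₀) • p₀ ⊗ₜ[K] r₀
        = (p' ⊗ₜ[K] r' - (φ (p' ⊗ₜ[K] r') / b₀) • p₀ ⊗ₜ[K] r₀)
          + b • (p' ⊗ₜ[K] r₀) + a • (p₀ ⊗ₜ[K] r') := by
      rw [hφdec, hdec, add_smul, mul_smul]
      abel
    rw [hfinal]
    exact W.add_mem (W.add_mem h3 (W.smul_mem b hpr0)) (W.smul_mem a hp0r)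
  -- every element, shifted, lies in W
  have lemAll : ∀ x : V₁ ⊗[K] V₂, x - (φ x / b₀) • p₀ ⊗ₜ[K] r₀ ∈ W := by
    intro x
    induction x using TensorProduct.induction_on with
    | zero =>
        simp only [map_zero, zero_div, zero_smul, sub_zero]
        exact W.zero_mem
    | tmul p r => exact lemC p r
    | add x y hx hy =>
        have hmem := W.add_mem hx hy
        have : x + y - (φ (x + y) / b₀) • p₀ ⊗ₜ[K] r₀
            = (x - (φ x / b₀) • p₀ ⊗ₜ[K] r₀) + (y - (φ y / b₀) • p₀ ⊗ₜ[K] r₀) := by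
          rw [map_add, add_div, add_smul]
          abel
        rw [this]
        exact hmem
  -- main equality
  have hmain : W = LinearMap.ker φ := by
    apply le_antisymm
    · rw [hWdef, Submodule.span_le]
      intro x hx
      exact hx.2
    · intro x hx
      have hx0 : φ x = 0 := hx
      have := lemAll x
      rwa [hx0, zero_div, zero_smul, sub_zero] at this
  refine ⟨hmain, ?_⟩
  rw [hmain]
  -- dimension count
  have hrtop : LinearMap.range φ = ⊤ := by
    rw [LinearMap.range_eq_top]
    intro c
    refine ⟨(c / b₀) • p₀ ⊗ₜ[K] r₀, ?_⟩
    rw [map_smul, ← hb₀def, smul_eq_mul]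
    field_simp
  have hrange : Module.finrank K (LinearMap.range φ) = 1 := by
    rw [hrtop, finrank_top, Module.finrank_self]
  have hsum := LinearMap.finrank_range_add_finrank_ker φ
  have htot : Module.finrank K (V₁ ⊗[K] V₂) = (m + 1) * (n + 1) := by
    rw [Module.finrank_tensorProduct]
    simp [V₁, V₂]
  rw [hrange, htot] at hsum
  exact Nat.add_left_cancel (hsum.trans (by ring))
end
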